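/- arXiv:2105.10137 — 5 statements merged into one kernel-verified Lean document; each statement's English description precedes it below -/
import Mathlib

section
/- For all integers n > k > 0, if a permutation σ of {1,...,n} can be expressed as a product of transpositions (x₁,y₁)·(x₂,y₂)·…·(x_k,y_k) where 0 < x₁ < x₂ < … < x_k < n and x_i < y_i ≤ n for all 1 ≤ i ≤ k, then σ is a product of exactly n − k disjoint cycles (i.e., σ has exactly n − k orbits on {1,...,n}, counting fixed points as cycles of length one). -/
/-- Number of cycles of a permutation, counting fixed points as cycles of length one. -/
def numCycles {n : ℕ} (σ : Equiv.Perm (Fin n)) : ℕ :=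
  σ.cycleType.card + (Finset.univ.filter fun a => σ a = a).card

/-!
Write `σ = (x₁ y₁) σ'`, where `σ'` is a product of transpositions of points larger than `x₁`, so
`σ'` fixes `x₁`. Left multiplication by a transposition `(a b)` with `a` a fixed point merges the
singleton cycle `{a}` into the cycle of `b` and so lowers the number of cycles by exactly one;
starting from the `n` cycles of the identity, the `k` transpositions leave `n - k` cycles.
Cycles are counted as the parts of `σ.partition`, the cycle type completed by ones.
-/

open Equiv Finset

namespace Equiv.Perm

variable {α : Type*} [Fintype α] [DecidableEq α]

theorem card_parts_partition_add_card_support (σ : Perm α) :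
    σ.partition.parts.card + #σ.support = σ.cycleType.card + Fintype.card α := by
  rw [parts_partition, Multiset.card_add, Multiset.card_replicate]
  have := σ.support.card_le_univ
  omega

theorem IsCycle.card_cycleType_swap_mul_add_card_support {c : Perm α} (hc : c.IsCycle) {x : α}
    (hx : c x ≠ x) :
    (swap x (c x) * c).cycleType.card + #c.support = #(swap x (c x) * c).support + 2 := by
  by_cases hcc : c (c x) = x
  · have hswap := hc.eq_swap_of_apply_apply_eq_self hx hcc
    have hone : swap x (c x) * c = 1 := by rw [mul_eq_one_iff_inv_eq, swap_inv, ← hswap]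
    rw [hone, cycleType_one, support_one, Multiset.card_zero, card_empty, hswap,
      support_swap hx.symm, card_pair hx.symm]
  · rw [card_cycleType_eq_one.2 (hc.swap_mul hx hcc), support_swap_mul_eq c x hcc,
      ← erase_eq, card_erase_of_mem (mem_support.2 hx)]
    have := card_pos.2 ⟨x, mem_support.2 hx⟩
    omega

/-- Multiplying by the transposition `(x, f x)` splits `x` off its cycle as a new fixed point. -/
theorem card_parts_partition_swap_mul {f : Perm α} {x : α} (hx : f x ≠ x) :
    (swap x (f x) * f).partition.parts.card = f.partition.parts.card + 1 := by
  set c := f.cycleOf x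
  set ρ := f * c⁻¹
  have hcf : c ∈ f.cycleFactorsFinset := cycleOf_mem_cycleFactorsFinset_iff.2 (mem_support.2 hx)
  have hc : c.IsCycle := f.isCycle_cycleOf hx
  have hcx : c x = f x := f.cycleOf_apply_self x
  have hρc : Disjoint ρ c := disjoint_mul_inv_of_mem_cycleFactorsFinset hcf
  have hf : f = c * ρ := by rw [← hρc.commute.eq, inv_mul_cancel_right]
  have hsc : Disjoint (swap x (c x) * c) ρ :=
    hρc.symm.mono (fun y hy => (mem_support_swap_mul_imp_mem_support_ne hy).1) le_rfl
  have hsplit : swap x (f x) * f = (swap x (c x) * c) * ρ := by rw [hcx, hf, mul_assoc]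
  have hcycle := hc.card_cycleType_swap_mul_add_card_support (hcx ▸ hx)
  have hcardf : f.cycleType.card = ρ.cycleType.card + 1 := by
    rw [hf, hρc.symm.cycleType_mul, Multiset.card_add, card_cycleType_eq_one.2 hc, add_comm]
  have hsuppf : #f.support = #c.support + #ρ.support := by
    rw [hf, hρc.symm.card_support_mul]
  have hcardsf : (swap x (f x) * f).cycleType.card =
      (swap x (c x) * c).cycleType.card + ρ.cycleType.card := by
    rw [hsplit, hsc.cycleType_mul, Multiset.card_add]
  have hsuppsf : #(swap x (f x) * f).support = #(swap x (c x) * c).support + #ρ.support := by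
    rw [hsplit, hsc.card_support_mul]
  have key := card_parts_partition_add_card_support (swap x (f x) * f)
  have key' := card_parts_partition_add_card_support f
  omega

/-- `τ = swap a b * σ` sends `a` to `b`, so `σ = swap a (τ a) * τ` is obtained from `τ` by
splitting `a` off its cycle. -/
theorem card_parts_partition_swap_mul_add_one {σ : Perm α} {a b : α} (ha : σ a = a)
    (hab : a ≠ b) : (swap a b * σ).partition.parts.card + 1 = σ.partition.parts.card := by
  have hτa : (swap a b * σ) a = b := by simp [ha]
  have := card_parts_partition_swap_mul (f := swap a b * σ) (x := a) (by rw [hτa]; exact hab.symm)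
  rwa [hτa, swap_mul_self_mul, eq_comm] at this

theorem card_parts_partition_prod_swap_add {k : ℕ} [Preorder α] (x y : Fin k → α)
    (hx : StrictMono x) (hxy : ∀ i, x i < y i) :
    (List.ofFn fun i => swap (x i) (y i)).prod.partition.parts.card + k = Fintype.card α := by
  induction k with
  | zero => simp [parts_partition]
  | succ k ih =>
    have hfix : (List.ofFn fun i : Fin k => swap (x i.succ) (y i.succ)).prod (x 0) = x 0 := by
      refine MulAction.mem_stabilizer_iff.1 <|
        (MulAction.stabilizer (Perm α) (x 0)).list_prod_mem fun g hg =>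
          MulAction.mem_stabilizer_iff.2 ?_
      obtain ⟨i, rfl⟩ := List.mem_ofFn.1 hg
      have hlt := hx (Fin.succ_pos i)
      exact swap_apply_of_ne_of_ne hlt.ne (hlt.trans (hxy i.succ)).ne
    have hmerge := card_parts_partition_swap_mul_add_one hfix (hxy 0).ne
    have hrest := ih (fun i => x i.succ) (fun i => y i.succ) (hx.comp Fin.strictMono_succ)
      fun i => hxy i.succ
    rw [List.ofFn_succ, List.prod_cons]
    omega

end Equiv.Perm

theorem numCycles_eq_card_parts_partition {n : ℕ} (σ : Perm (Fin n)) :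
    numCycles σ = σ.partition.parts.card := by
  have : (univ.filter fun a => σ a = a) = σ.supportᶜ := by
    ext z
    simp [Perm.mem_support]
  rw [numCycles, this, card_compl, Perm.parts_partition, Multiset.card_add,
    Multiset.card_replicate]

theorem stmt0_general (n k : ℕ)
    (x y : Fin k → Fin n) (hx : StrictMono x) (hxy : ∀ i, x i < y i)
    (σ : Equiv.Perm (Fin n))
    (hσ : σ = (List.ofFn fun i => Equiv.swap (x i) (y i)).prod) :
    numCycles σ = n - k := by
  have := Perm.card_parts_partition_prod_swap_add x y hx hxy
  have hcard := Fintype.card_fin n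
  rw [numCycles_eq_card_parts_partition, hσ]
  omega

theorem stmt0 (n k : ℕ) (hk : 0 < k) (hkn : k < n)
    (x y : Fin k → Fin n) (hx : StrictMono x) (hxy : ∀ i, x i < y i)
    (σ : Equiv.Perm (Fin n))
    (hσ : σ = (List.ofFn fun i => Equiv.swap (x i) (y i)).prod) :
    numCycles σ = n - k :=
  stmt0_general n k x y hx hxy σ hσ
end

section
/- For all integers n > k > 0, every permutation σ of {1,...,n} that is a product of exactly n − k disjoint cycles admits an expression as a product of transpositions (x₁,y₁)·(x₂,y₂)·…·(x_k,y_k) with 0 < x₁ < x₂ < … < x_k < n and x_i < y_i ≤ n for all 1 ≤ i ≤ k. -/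
open Equiv Finset

namespace Equiv.Perm

section

variable {α : Type*} [Fintype α] [DecidableEq α]

/-- The least number of transpositions whose product is `σ`. -/
def transpositionLength (σ : Perm α) : ℕ :=
  (σ.cycleType.map (· - 1)).sum

theorem transpositionLength_add_card_cycleType (σ : Perm α) :
    σ.transpositionLength + Multiset.card σ.cycleType = #σ.support := by
  have hpos : ∀ ℓ ∈ σ.cycleType, ℓ - 1 + 1 = ℓ := fun ℓ hℓ =>
    Nat.sub_add_cancel (one_le_two.trans (two_le_of_mem_cycleType hℓ))
  calc σ.transpositionLength + Multiset.card σ.cycleType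
      _ = (σ.cycleType.map fun ℓ => ℓ - 1 + 1).sum := by
        simp [transpositionLength, Multiset.sum_map_add]
      _ = #σ.support := by rw [Multiset.map_congr rfl hpos, Multiset.map_id', sum_cycleType]

theorem transpositionLength_eq_zero_iff {σ : Perm α} : σ.transpositionLength = 0 ↔ σ = 1 := by
  refine ⟨fun h => ?_, fun h => by simp [h, transpositionLength]⟩
  rw [← cycleType_eq_zero, Multiset.eq_zero_iff_forall_notMem]
  intro ℓ hℓ
  have := (Multiset.sum_eq_zero_iff.mp h) _ (Multiset.mem_map_of_mem (· - 1) hℓ)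
  have := two_le_of_mem_cycleType hℓ
  omega

theorem Disjoint.transpositionLength_mul {σ τ : Perm α} (h : Disjoint σ τ) :
    (σ * τ).transpositionLength = σ.transpositionLength + τ.transpositionLength := by
  simp only [transpositionLength, h.cycleType_mul, Multiset.map_add, Multiset.sum_add]

theorem IsCycle.transpositionLength {c : Perm α} (hc : c.IsCycle) :
    c.transpositionLength = #c.support - 1 := by
  simp [Perm.transpositionLength, hc.cycleType]

theorem IsCycle.transpositionLength_swap_mul {c : Perm α} (hc : c.IsCycle) {x : α}
    (hx : c x ≠ x) :
    (swap x (c x) * c).transpositionLength + 1 = c.transpositionLength := by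
  by_cases hcc : c (c x) = x
  · have hswap := hc.eq_swap_of_apply_apply_eq_self hx hcc
    have hone : swap x (c x) * c = 1 := by rw [hswap, swap_apply_left, swap_mul_self]
    have htwo : #c.support = 2 := by rw [hswap, card_support_swap hx.symm]
    rw [hone, transpositionLength_eq_zero_iff.mpr rfl, hc.transpositionLength, htwo]
  · have hsupp := hc.two_le_card_support
    have hmem : x ∈ c.support := mem_support.mpr hx
    rw [(hc.swap_mul hx hcc).transpositionLength, hc.transpositionLength,
      support_swap_mul_eq c x hcc, sdiff_singleton_eq_erase, card_erase_of_mem hmem]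
    omega

/-- Multiplying by `swap x (σ x)` splits `x` off its cycle as a fixed point. -/
theorem transpositionLength_swap_mul {σ : Perm α} {x : α} (hx : σ x ≠ x) :
    (swap x (σ x) * σ).transpositionLength + 1 = σ.transpositionLength := by
  set c := σ.cycleOf x
  have hc : c.IsCycle := isCycle_cycleOf σ hx
  have hcx : c x = σ x := σ.cycleOf_apply_self x
  have hdisj : Disjoint c (σ * c⁻¹) :=
    (disjoint_mul_inv_of_mem_cycleFactorsFinset
      (cycleOf_mem_cycleFactorsFinset_iff.mpr (mem_support.mpr hx))).symm
  have hσ : σ = c * (σ * c⁻¹) := by rw [hdisj.commute.eq, inv_mul_cancel_right]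
  have hdisj' : Disjoint (swap x (c x) * c) (σ * c⁻¹) :=
    hdisj.mono (fun _ ha => (mem_support_swap_mul_imp_mem_support_ne ha).1) subset_rfl
  have hswap : swap x (σ x) * σ = (swap x (c x) * c) * (σ * c⁻¹) := by
    rw [mul_assoc, ← hσ, hcx]
  rw [hswap, hdisj'.transpositionLength_mul, add_right_comm,
    hc.transpositionLength_swap_mul (hcx ▸ hx), ← hdisj.transpositionLength_mul, ← hσ]

end

section LinearOrder

variable {α : Type*} [Fintype α] [LinearOrder α]

theorem min'_support_lt_of_mem_support_swap_mul {σ : Perm α} (hσ : σ.support.Nonempty) {a : α}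
    (ha : a ∈ (swap (σ.support.min' hσ) (σ (σ.support.min' hσ)) * σ).support) :
    σ.support.min' hσ < a :=
  have ha' := mem_support_swap_mul_imp_mem_support_ne ha
  lt_of_le_of_ne (min'_le _ _ ha'.1) (Ne.symm ha'.2)

/-- Peel off the transposition at the least moved point, so that the remaining factors only
involve larger points. -/
theorem exists_strictMono_swap_prod {k : ℕ} {σ : Perm α} (hσ : σ.transpositionLength = k) :
    ∃ x y : Fin k → α, StrictMono x ∧ (∀ i, x i < y i) ∧ (∀ i, x i ∈ σ.support) ∧
      σ = (List.ofFn fun i => swap (x i) (y i)).prod := by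
  induction k generalizing σ with
  | zero =>
    refine ⟨Fin.elim0, Fin.elim0, fun i => i.elim0, fun i => i.elim0, fun i => i.elim0, ?_⟩
    simpa using transpositionLength_eq_zero_iff.mp hσ
  | succ k ih =>
    have hne : σ.support.Nonempty := by
      rw [nonempty_iff_ne_empty, Ne, support_eq_empty_iff, ← transpositionLength_eq_zero_iff, hσ]
      exact k.succ_ne_zero
    set m := σ.support.min' hne
    have hm : m ∈ σ.support := min'_mem _ hne
    obtain ⟨x, y, hx, hxy, hxσ, hprod⟩ := ih (σ := swap m (σ m) * σ) (by
      have := transpositionLength_swap_mul (mem_support.mp hm)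
      omega)
    refine ⟨Fin.cons m x, Fin.cons (σ m) y, ?_, ?_, ?_, ?_⟩
    · exact Fin.strictMono_cons.mpr
        ⟨fun i => min'_support_lt_of_mem_support_swap_mul hne (hxσ i), hx⟩
    · exact Fin.forall_fin_succ.mpr ⟨lt_of_le_of_ne (min'_le _ _ (apply_mem_support.mpr hm))
        (mem_support.mp hm).symm, hxy⟩
    · exact Fin.forall_fin_succ.mpr
        ⟨hm, fun i => (mem_support_swap_mul_imp_mem_support_ne (hxσ i)).1⟩
    · rw [List.ofFn_succ, List.prod_cons]
      simp only [Fin.cons_zero, Fin.cons_succ]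
      rw [← hprod, ← mul_assoc, swap_mul_self, one_mul]

end LinearOrder

end Equiv.Perm

theorem numCycles_add_transpositionLength {n : ℕ} (σ : Perm (Fin n)) :
    numCycles σ + σ.transpositionLength = n := by
  have hfixed : (univ.filter fun a => σ a = a) = σ.supportᶜ := by
    ext a
    simp [Perm.mem_support]
  have hsupport : #σ.support ≤ n := by simpa using card_le_univ σ.support
  have := σ.transpositionLength_add_card_cycleType
  rw [numCycles, hfixed, card_compl, Fintype.card_fin]
  omega

theorem stmt1_general (n k : ℕ) (hkn : k < n)
    (σ : Equiv.Perm (Fin n)) (hσ : numCycles σ = n - k) :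
    ∃ x y : Fin k → Fin n, StrictMono x ∧ (∀ i, x i < y i) ∧
      σ = (List.ofFn fun i => Equiv.swap (x i) (y i)).prod := by
  have hlength : σ.transpositionLength = k := by
    have := numCycles_add_transpositionLength σ
    omega
  obtain ⟨x, y, hx, hxy, -, hprod⟩ := Perm.exists_strictMono_swap_prod hlength
  exact ⟨x, y, hx, hxy, hprod⟩

theorem stmt1 (n k : ℕ) (hk : 0 < k) (hkn : k < n)
    (σ : Equiv.Perm (Fin n)) (hσ : numCycles σ = n - k) :
    ∃ x y : Fin k → Fin n, StrictMono x ∧ (∀ i, x i < y i) ∧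
      σ = (List.ofFn fun i => Equiv.swap (x i) (y i)).prod :=
  stmt1_general n k hkn σ hσ
end

section
/- For all integers n > k > 0, if a permutation σ of {1,...,n} admits an expression as a product of transpositions (x₁,y₁)·…·(x_k,y_k) with 0 < x₁ < … < x_k < n and x_i < y_i ≤ n for all i, then this expression is unique: the sequences (x_i) and (y_i) are uniquely determined by σ. -/
/-!
Write `σ = (x₀,y₀)(x₁,y₁)⋯` with `x₀ < x₁ < ⋯` and `xᵢ < yᵢ`. No transposition moves a point
below `x₀`, and only the first one moves `x₀` itself, so `σ` fixes every point below `x₀` and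
sends `x₀` to `y₀`. Hence `x₀` is the least point moved by `σ` and `y₀ = σ x₀`; cancelling the
first transposition and inducting on the length gives uniqueness.
-/

open Equiv

variable {α : Type*} [LinearOrder α]

def swapProd {k : ℕ} (x y : Fin k → α) : Perm α :=
  (List.ofFn fun i => swap (x i) (y i)).prod

theorem swapProd_succ {k : ℕ} (x y : Fin (k + 1) → α) :
    swapProd x y = swap (x 0) (y 0) * swapProd (Fin.tail x) (Fin.tail y) := by
  rw [swapProd, List.ofFn_succ, List.prod_cons]
  rfl

theorem swapProd_apply_of_forall_lt {k : ℕ} {x y : Fin k → α} (hxy : ∀ i, x i < y i) {z : α}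
    (hz : ∀ i, z < x i) : swapProd x y z = z := by
  have : swapProd x y ∈ MulAction.stabilizer (Perm α) z := by
    refine Subgroup.list_prod_mem _ fun f hf => ?_
    obtain ⟨i, rfl⟩ := List.mem_ofFn.mp hf
    exact swap_apply_of_ne_of_ne (hz i).ne ((hz i).trans (hxy i)).ne
  exact this

theorem swapProd_apply_of_lt_head {k : ℕ} {x y : Fin (k + 1) → α} (hx : StrictMono x)
    (hxy : ∀ i, x i < y i) {z : α} (hz : z < x 0) : swapProd x y z = z :=
  swapProd_apply_of_forall_lt hxy fun i => hz.trans_le (hx.monotone (Fin.zero_le i))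

theorem swapProd_apply_head {k : ℕ} {x y : Fin (k + 1) → α} (hx : StrictMono x)
    (hxy : ∀ i, x i < y i) : swapProd x y (x 0) = y 0 := by
  rw [swapProd_succ, Perm.mul_apply,
    swapProd_apply_of_forall_lt (x := Fin.tail x) (y := Fin.tail y) (fun i => hxy i.succ)
      fun i => hx (Fin.succ_pos i),
    swap_apply_left]

theorem head_le_of_swapProd_eq {k : ℕ} {x y x' y' : Fin (k + 1) → α}
    (hx : StrictMono x) (hxy : ∀ i, x i < y i) (hx' : StrictMono x') (hxy' : ∀ i, x' i < y' i)
    (h : swapProd x y = swapProd x' y') : x 0 ≤ x' 0 := by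
  by_contra! hlt
  have hfix := swapProd_apply_of_lt_head hx hxy hlt
  rw [h, swapProd_apply_head hx' hxy'] at hfix
  exact (hxy' 0).ne' hfix

theorem eq_and_eq_of_swapProd_eq {k : ℕ} {x y x' y' : Fin k → α}
    (hx : StrictMono x) (hxy : ∀ i, x i < y i) (hx' : StrictMono x') (hxy' : ∀ i, x' i < y' i)
    (h : swapProd x y = swapProd x' y') : x = x' ∧ y = y' := by
  induction k with
  | zero => exact ⟨Subsingleton.elim _ _, Subsingleton.elim _ _⟩
  | succ k ih =>
    have hx0 : x 0 = x' 0 :=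
      (head_le_of_swapProd_eq hx hxy hx' hxy' h).antisymm
        (head_le_of_swapProd_eq hx' hxy' hx hxy h.symm)
    have hy0 : y 0 = y' 0 := by
      rw [← swapProd_apply_head hx hxy, h, hx0, swapProd_apply_head hx' hxy']
    have htail : swapProd (Fin.tail x) (Fin.tail y) = swapProd (Fin.tail x') (Fin.tail y') := by
      rw [swapProd_succ, swapProd_succ, hx0, hy0] at h
      exact mul_left_cancel h
    obtain ⟨hxt, hyt⟩ : Fin.tail x = Fin.tail x' ∧ Fin.tail y = Fin.tail y' :=
      ih (hx.comp Fin.strictMono_succ) (fun i => hxy i.succ)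
        (hx'.comp Fin.strictMono_succ) (fun i => hxy' i.succ) htail
    rw [← Fin.cons_self_tail x, ← Fin.cons_self_tail y, ← Fin.cons_self_tail x',
      ← Fin.cons_self_tail y', hx0, hy0, hxt, hyt]
    exact ⟨rfl, rfl⟩

theorem stmt2_general (n k : ℕ)
    (x y x' y' : Fin k → Fin n)
    (hx : StrictMono x) (hxy : ∀ i, x i < y i)
    (hx' : StrictMono x') (hxy' : ∀ i, x' i < y' i)
    (heq : (List.ofFn fun i => Equiv.swap (x i) (y i)).prod =
           (List.ofFn fun i => Equiv.swap (x' i) (y' i)).prod) :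
    x = x' ∧ y = y' :=
  eq_and_eq_of_swapProd_eq hx hxy hx' hxy' heq

theorem stmt2 (n k : ℕ) (hk : 0 < k) (hkn : k < n)
    (x y x' y' : Fin k → Fin n)
    (hx : StrictMono x) (hxy : ∀ i, x i < y i)
    (hx' : StrictMono x') (hxy' : ∀ i, x' i < y' i)
    (heq : (List.ofFn fun i => Equiv.swap (x i) (y i)).prod =
           (List.ofFn fun i => Equiv.swap (x' i) (y' i)).prod) :
    x = x' ∧ y = y' :=
  stmt2_general n k x y x' y' hx hxy hx' hxy' heq
end

section
/- For every integer ℓ ≥ 2, the number of boat sequences involving ℓ people equals ℓ!·((ℓ−1)!)²/2^{ℓ−1}, where a boat sequence is encoded (via the rank map r) as a pair of sequences: a sequence (S₁,...,S_{ℓ−1}) with S_i a 2-element subset of {1,...,ℓ+1−i}, and a sequence (t₁,...,t_{ℓ−2}) with t_i an element of {1,...,i+1}. Equivalently, the product ∏_{i=1}^{ℓ−1} binom(ℓ+1−i, 2) · ∏_{i=1}^{ℓ−2} (i+1) = ℓ!·((ℓ−1)!)²/2^{ℓ−1}. -/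
/-!
At step `i` two of the `ℓ + 1 - i` people still on the near shore cross and one of the `i + 1`
people on the far shore rows back. Since `2 * (k + 2).choose 2 = (k + 2) * (k + 1)`, the product
of the crossing choices is `ℓ! * (ℓ - 1)! / 2 ^ (ℓ - 1)`, and the return choices contribute
another `(ℓ - 1)!`.
-/

open Finset Nat

def boatSequenceCount (ℓ : ℕ) : ℕ :=
  (∏ i ∈ range (ℓ - 1), (ℓ - i).choose 2) * ∏ i ∈ range (ℓ - 2), (i + 2)

theorem choose_two_add_two_mul_two (k : ℕ) : (k + 2).choose 2 * 2 = (k + 2) * (k + 1) := by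
  simpa [choose_one_right] using (add_one_mul_choose_eq (k + 1) 1).symm

theorem two_pow_mul_prod_range_choose_two (m : ℕ) :
    2 ^ m * ∏ k ∈ range m, (k + 2).choose 2 = (m + 1)! * m ! := by
  induction m with
  | zero => rfl
  | succ m ih =>
    rw [prod_range_succ, pow_succ, factorial_succ (m + 1), factorial_succ m]
    calc 2 ^ m * 2 * ((∏ k ∈ range m, (k + 2).choose 2) * (m + 2).choose 2)
        = (2 ^ m * ∏ k ∈ range m, (k + 2).choose 2) * ((m + 2).choose 2 * 2) := by ring
      _ = (m + 1 + 1) * (m + 1)! * ((m + 1) * m !) := by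
        rw [ih, choose_two_add_two_mul_two]; ring

theorem prod_range_add_two (n : ℕ) : ∏ i ∈ range n, (i + 2) = (n + 1)! := by
  rw [← prod_range_add_one_eq_factorial, prod_range_succ']
  simp

theorem two_pow_mul_boatSequenceCount (ℓ : ℕ) :
    2 ^ (ℓ - 1) * boatSequenceCount ℓ = ℓ ! * (ℓ - 1)! ^ 2 := by
  rcases ℓ with _ | _ | m
  · rfl
  · rfl
  · have reflect : ∏ i ∈ range (m + 1), (m + 2 - i).choose 2 =
        ∏ k ∈ range (m + 1), (k + 2).choose 2 := by
      rw [← prod_range_reflect]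
      exact prod_congr rfl fun i hi => by rw [mem_range] at hi; congr 1; omega
    rw [boatSequenceCount, show m + 2 - 1 = m + 1 by omega, show m + 2 - 2 = m by omega, reflect,
      prod_range_add_two, ← mul_assoc, two_pow_mul_prod_range_choose_two]
    ring

theorem card_boatSequences (ℓ : ℕ) :
    Nat.card ((∀ i : Fin (ℓ - 1), {s : Finset (Fin (ℓ - i.val)) // s.card = 2}) ×
        (∀ i : Fin (ℓ - 2), Fin (i.val + 2))) = boatSequenceCount ℓ := by
  rw [Nat.card_prod, Nat.card_pi, Nat.card_pi]
  simp only [Nat.card_eq_fintype_card, Fintype.card_finset_len, Fintype.card_fin]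
  rw [Fin.prod_univ_eq_prod_range (fun i => (ℓ - i).choose 2),
    Fin.prod_univ_eq_prod_range (fun i => i + 2), boatSequenceCount]

theorem prod_Icc_one_eq_prod_range {M : Type*} [CommMonoid M] (f : ℕ → M) (n : ℕ) :
    ∏ i ∈ Icc 1 n, f i = ∏ i ∈ range n, f (i + 1) := by
  rw [← Ico_add_one_right_eq_Icc, prod_Ico_eq_prod_range, add_tsub_cancel_right]
  simp only [add_comm 1]

theorem prod_Icc_choose_two_mul_prod_Icc (ℓ : ℕ) :
    (∏ i ∈ Icc 1 (ℓ - 1), ((ℓ + 1 - i).choose 2 : ℚ)) * ∏ i ∈ Icc 1 (ℓ - 2), ((i : ℚ) + 1) =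
      boatSequenceCount ℓ := by
  simp only [boatSequenceCount, prod_Icc_one_eq_prod_range, Nat.add_sub_add_right]
  push_cast
  ring_nf

theorem stmt6_general (ℓ : ℕ) :
    ((Nat.card ((∀ i : Fin (ℓ - 1), {s : Finset (Fin (ℓ - i.val)) // s.card = 2}) ×
        (∀ i : Fin (ℓ - 2), Fin (i.val + 2))) : ℚ) =
      (ℓ.factorial : ℚ) * ((ℓ - 1).factorial : ℚ) ^ 2 / 2 ^ (ℓ - 1)) ∧
    ((∏ i ∈ Finset.Icc 1 (ℓ - 1), ((ℓ + 1 - i).choose 2 : ℚ)) *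
        ∏ i ∈ Finset.Icc 1 (ℓ - 2), ((i : ℚ) + 1) =
      (ℓ.factorial : ℚ) * ((ℓ - 1).factorial : ℚ) ^ 2 / 2 ^ (ℓ - 1)) := by
  have count : (boatSequenceCount ℓ : ℚ) = ℓ ! * (ℓ - 1)! ^ 2 / 2 ^ (ℓ - 1) := by
    rw [eq_div_iff (by positivity), mul_comm]
    exact_mod_cast two_pow_mul_boatSequenceCount ℓ
  exact ⟨by rw [card_boatSequences, count], by rw [prod_Icc_choose_two_mul_prod_Icc, count]⟩

theorem stmt6 (ℓ : ℕ) (hℓ : 2 ≤ ℓ) :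
    ((Nat.card ((∀ i : Fin (ℓ - 1), {s : Finset (Fin (ℓ - i.val)) // s.card = 2}) ×
        (∀ i : Fin (ℓ - 2), Fin (i.val + 2))) : ℚ) =
      (ℓ.factorial : ℚ) * ((ℓ - 1).factorial : ℚ) ^ 2 / 2 ^ (ℓ - 1)) ∧
    ((∏ i ∈ Finset.Icc 1 (ℓ - 1), ((ℓ + 1 - i).choose 2 : ℚ)) *
        ∏ i ∈ Finset.Icc 1 (ℓ - 2), ((i : ℚ) + 1) =
      (ℓ.factorial : ℚ) * ((ℓ - 1).factorial : ℚ) ^ 2 / 2 ^ (ℓ - 1)) :=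
  stmt6_general ℓ
end

section
/- For every integer n ≥ 1, the number of sequences ((x₁,y₁),…,(x_k,y_k)) of transpositions with 0 < x₁ < … < x_k < n, x_i < y_i ≤ n, and exactly k factors, equals stirling1(n, n−k) (the unsigned Stirling number of the first kind); equivalently, the number of such sequences is ∑ over subsets {x₁<…<x_k} ⊆ {1,...,n−1} of ∏_i (n − x_i). -/
/-!
A sequence `((x₁, y₁), …, (x_k, y_k))` is a `k`-subset `{x₁ < ⋯ < x_k}` together with an
independent choice of each `y_i` above `x_i`, so over any finite linear order the count is
`∑_{|s| = k} ∏_{x ∈ s} #(Ioi x)`. On `{0, …, n - 1}` the factor of `x` is `n - 1 - x`; the top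
element contributes the factor `0`, and what remains is the elementary symmetric function
`e_k(1, …, n - 1)`. Splitting off the element of largest factor gives exactly the recursion
`c(m + 1, j + 1) = c(m, j) + m · c(m, j + 1)` of the Stirling numbers of the first kind.
-/

/-- Unsigned Stirling numbers of the first kind. -/
def stirling1 : ℕ → ℕ → ℕ
  | 0, 0 => 1
  | 0, _ + 1 => 0
  | _ + 1, 0 => 0
  | n + 1, m + 1 => stirling1 n m + n * stirling1 n (m + 1)

open Finset

theorem stirling1_eq_stirlingFirst : ∀ n m, stirling1 n m = Nat.stirlingFirst n m
  | 0, 0 | 0, _ + 1 | _ + 1, 0 => rfl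
  | n + 1, m + 1 => by
    rw [stirling1, Nat.stirlingFirst_succ_succ, stirling1_eq_stirlingFirst n m,
      stirling1_eq_stirlingFirst n (m + 1), add_comm]

namespace Finset

variable {ι κ R : Type*} [CommSemiring R] {k : ℕ}

theorem sum_powersetCard_map_prod (e : ι ↪ κ) (t : Finset ι) (f : κ → R) :
    ∑ s ∈ powersetCard k (t.map e), ∏ x ∈ s, f x = ∑ s ∈ powersetCard k t, ∏ x ∈ s, f (e x) := by
  simp only [powersetCard_map, sum_map, RelEmbedding.coe_toEmbedding, mapEmbedding_apply, prod_map]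

variable [DecidableEq ι]

theorem sum_powersetCard_succ_insert_prod {a : ι} {t : Finset ι} (ha : a ∉ t) (f : ι → R) :
    ∑ s ∈ powersetCard (k + 1) (insert a t), ∏ x ∈ s, f x =
      ∑ s ∈ powersetCard (k + 1) t, ∏ x ∈ s, f x + f a * ∑ s ∈ powersetCard k t, ∏ x ∈ s, f x := by
  have hnot : ∀ s ∈ powersetCard k t, a ∉ s := fun s hs h => ha (mem_powersetCard.1 hs |>.1 h)
  rw [powersetCard_succ_insert ha, sum_union, sum_image, mul_sum,
    sum_congr rfl fun s hs => prod_insert (f := f) (hnot s hs)]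
  · exact fun s hs s' hs' h => by
      rw [← erase_insert (hnot s hs), ← erase_insert (hnot s' hs'), h]
  · exact disjoint_left.2 fun s hs hs' => by
      obtain ⟨u, -, rfl⟩ := mem_image.1 hs'
      exact ha (mem_powersetCard.1 hs |>.1 (mem_insert_self a u))

theorem sum_powersetCard_insert_prod_of_eq_zero {a : ι} {t : Finset ι} (ha : a ∉ t)
    {f : ι → R} (hf : f a = 0) :
    ∑ s ∈ powersetCard k (insert a t), ∏ x ∈ s, f x = ∑ s ∈ powersetCard k t, ∏ x ∈ s, f x := by
  cases k with
  | zero => simp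
  | succ k => rw [sum_powersetCard_succ_insert_prod ha, hf, zero_mul, add_zero]

end Finset

theorem sum_powersetCard_range_prod_sub_eq_stirlingFirst (m k : ℕ) :
    ∑ s ∈ powersetCard k (range m), ∏ x ∈ s, (m - x) = Nat.stirlingFirst (m + 1) (m + 1 - k) := by
  induction m generalizing k with
  | zero => cases k <;> simp [Nat.stirlingFirst_self]
  | succ m ih =>
    cases k with
    | zero => simp [Nat.stirlingFirst_self]
    | succ k =>
      have hrange : range (m + 1) = insert 0 ((range m).map (addRightEmbedding 1)) := by
        ext (_ | x) <;> simp
      rw [hrange, sum_powersetCard_succ_insert_prod (by simp), sum_powersetCard_map_prod,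
        sum_powersetCard_map_prod]
      simp only [addRightEmbedding_apply, Nat.add_sub_add_right, ih, Nat.sub_zero]
      rcases le_or_gt k m with hk | hk
      · obtain ⟨j, rfl⟩ := Nat.exists_eq_add_of_le hk
        rw [show k + j - k = j by omega, show k + j + 1 - k = j + 1 by omega,
          Nat.stirlingFirst_succ_succ (k + j + 1) j, add_comm]
      · -- no `k`-subsets, and the truncated index `m + 1 - k` is `0`, where `stirlingFirst` vanishes
        rw [Nat.sub_eq_zero_of_le hk.le, Nat.sub_eq_zero_of_le hk]
        simp

theorem card_strictMono_lt_pairs_eq_sum {α : Type*} [LinearOrder α] [Fintype α]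
    [LocallyFiniteOrderTop α] (k : ℕ) :
    Nat.card { p : (Fin k → α) × (Fin k → α) // StrictMono p.1 ∧ ∀ i, p.1 i < p.2 i } =
      ∑ s ∈ powersetCard k (univ : Finset α), ∏ x ∈ s, #(Ioi x) := by
  classical
  let e : { p : (Fin k → α) × (Fin k → α) // StrictMono p.1 ∧ ∀ i, p.1 i < p.2 i } ≃
      Σ f : Fin k ↪o α, ∀ i, Ioi (f i) :=
    { toFun p := ⟨.ofStrictMono p.1.1 p.2.1, fun i => ⟨p.1.2 i, mem_Ioi.2 (p.2.2 i)⟩⟩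
      invFun q := ⟨(q.1, fun i => q.2 i), q.1.strictMono, fun i => mem_Ioi.1 (q.2 i).2⟩
      left_inv _ := rfl
      right_inv _ := rfl }
  rw [Nat.card_congr (e.trans (Equiv.sigmaCongrLeft Set.powersetCard.ofFinEmbEquiv.symm).symm),
    Nat.card_sigma, sum_subtype (p := (· ∈ Set.powersetCard α k)) _
      (by simp [Set.powersetCard.mem_iff])]
  refine Fintype.sum_congr _ _ fun s => ?_
  conv_rhs => rw [← map_orderEmbOfFin_univ s.1 s.2, prod_map]
  simp only [Nat.card_eq_fintype_card, Fintype.card_pi, Fintype.card_coe,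
    Set.powersetCard.ofFinEmbEquiv_symm_apply, RelEmbedding.coe_toEmbedding]

theorem sum_powersetCard_univ_fin_prod_card_Ioi (n k : ℕ) :
    ∑ s ∈ powersetCard k (univ : Finset (Fin n)), ∏ x ∈ s, #(Ioi x) =
      ∑ s ∈ powersetCard k (range n), ∏ x ∈ s, (n - 1 - x) := by
  rw [← Nat.Iio_eq_range, ← Fin.map_valEmbedding_univ, sum_powersetCard_map_prod]
  simp only [Fin.card_Ioi, Fin.valEmbedding_apply]

theorem stmt16_general (n k : ℕ) (hn : 1 ≤ n) :
    Nat.card { p : (Fin k → Fin n) × (Fin k → Fin n) //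
        StrictMono p.1 ∧ ∀ i, p.1 i < p.2 i } = stirling1 n (n - k) ∧
    Nat.card { p : (Fin k → Fin n) × (Fin k → Fin n) //
        StrictMono p.1 ∧ ∀ i, p.1 i < p.2 i } =
      ∑ s ∈ Finset.powersetCard k (Finset.Icc 1 (n - 1)), ∏ x ∈ s, (n - x) := by
  obtain ⟨m, rfl⟩ : ∃ m, n = m + 1 := ⟨n - 1, by omega⟩
  have hcard : Nat.card { p : (Fin k → Fin (m + 1)) × (Fin k → Fin (m + 1)) //
      StrictMono p.1 ∧ ∀ i, p.1 i < p.2 i } = ∑ s ∈ powersetCard k (range m), ∏ x ∈ s, (m - x) := by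
    rw [card_strictMono_lt_pairs_eq_sum, sum_powersetCard_univ_fin_prod_card_Ioi,
      Nat.add_sub_cancel, range_add_one,
      sum_powersetCard_insert_prod_of_eq_zero (by simp) (Nat.sub_self m)]
  have hIcc : Icc 1 m = (range m).map (addRightEmbedding 1) := by
    ext (_ | x) <;> simp
  refine ⟨?_, ?_⟩
  · rw [hcard, sum_powersetCard_range_prod_sub_eq_stirlingFirst, stirling1_eq_stirlingFirst]
  · rw [hcard, Nat.add_sub_cancel, hIcc, sum_powersetCard_map_prod]
    simp only [addRightEmbedding_apply, Nat.add_sub_add_right]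

theorem stmt16 (n k : ℕ) (hn : 1 ≤ n) (hk : k ≤ n - 1) :
    Nat.card { p : (Fin k → Fin n) × (Fin k → Fin n) //
        StrictMono p.1 ∧ ∀ i, p.1 i < p.2 i } = stirling1 n (n - k) ∧
    Nat.card { p : (Fin k → Fin n) × (Fin k → Fin n) //
        StrictMono p.1 ∧ ∀ i, p.1 i < p.2 i } =
      ∑ s ∈ Finset.powersetCard k (Finset.Icc 1 (n - 1)), ∏ x ∈ s, (n - x) :=
  stmt16_general n k hn
end
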